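/- arXiv:2410.09440 — 2 statements merged into one kernel-verified Lean document; each statement's English description precedes it below -/
import Mathlib

section
/- For all natural numbers M ≥ 2, K ≥ 1, L ≥ 1, in the spider graph Sp(M,K,L) the graph distance between two distinct leg vertices v_{m,k,ℓ} and v_{m',k',ℓ'} equals: |ℓ − ℓ'| if m = m' and k = k'; ℓ + ℓ' + 2 if m = m' and k ≠ k'; and ℓ + ℓ' + 3 if m ≠ m'. -/
/-- Vertices of the spider graph `Sp(M,K,L)`: `M` core vertices plus
leg vertices `v_{m,k,ℓ}` for `m < M`, `k < K`, `ℓ < L`. -/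
abbrev SpiderVertex (M K L : ℕ) := Fin M ⊕ (Fin M × Fin K × Fin L)

/-- Base relation generating the edges of the spider graph. -/
def spiderRel (M K L : ℕ) : SpiderVertex M K L → SpiderVertex M K L → Prop
  | Sum.inl _, Sum.inl _ => True
  | Sum.inl m, Sum.inr (m', _, l) => m = m' ∧ (l : ℕ) = 0
  | Sum.inr _, Sum.inl _ => False
  | Sum.inr (m, k, l), Sum.inr (m', k', l') =>
      m = m' ∧ k = k' ∧ (l : ℕ) + 1 = (l' : ℕ)

/-- The spider graph `Sp(M,K,L)`. -/
def spiderGraph (M K L : ℕ) : SimpleGraph (SpiderVertex M K L) :=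
  SimpleGraph.fromRel (spiderRel M K L)

instance (M K L : ℕ) : DecidableRel (spiderRel M K L) := fun x y =>
  match x, y with
  | Sum.inl _, Sum.inl _ => inferInstanceAs (Decidable True)
  | Sum.inl m, Sum.inr (m', _, l) => inferInstanceAs (Decidable (m = m' ∧ (l : ℕ) = 0))
  | Sum.inr _, Sum.inl _ => inferInstanceAs (Decidable False)
  | Sum.inr (m, k, l), Sum.inr (m', k', l') =>
      inferInstanceAs (Decidable (m = m' ∧ k = k' ∧ (l : ℕ) + 1 = (l' : ℕ)))

instance (M K L : ℕ) : DecidableRel (spiderGraph M K L).Adj := fun x y =>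
  inferInstanceAs (Decidable (x ≠ y ∧ (spiderRel M K L x y ∨ spiderRel M K L y x)))

section Aux
variable {M K L : ℕ}

lemma spider_adj_leg_core (m : Fin M) (k : Fin K) (h0 : 0 < L) :
    (spiderGraph M K L).Adj (Sum.inr (m, k, ⟨0, h0⟩)) (Sum.inl m) := by
  constructor
  · simp
  · right; exact ⟨rfl, rfl⟩

lemma spider_adj_leg_succ (m : Fin M) (k : Fin K) (j : ℕ) (h : j + 1 < L) :
    (spiderGraph M K L).Adj (Sum.inr (m, k, ⟨j, by omega⟩)) (Sum.inr (m, k, ⟨j+1, h⟩)) := by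
  constructor
  · simp [Fin.ext_iff]
  · left; exact ⟨rfl, rfl, rfl⟩

lemma spider_adj_core_core (a b : Fin M) (h : a ≠ b) :
    (spiderGraph M K L).Adj (Sum.inl a) (Sum.inl b) := by
  constructor
  · simpa using h
  · left; trivial

lemma spider_walk_to_core (m : Fin M) (k : Fin K) :
    ∀ (j : ℕ) (h : j < L), ∃ p : (spiderGraph M K L).Walk (Sum.inr (m, k, ⟨j, h⟩)) (Sum.inl m),
      p.length = j + 1
  | 0, h => ⟨SimpleGraph.Walk.cons (spider_adj_leg_core m k h) SimpleGraph.Walk.nil, rfl⟩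
  | (j+1), h => by
    obtain ⟨p, hp⟩ := spider_walk_to_core m k j (by omega)
    exact ⟨SimpleGraph.Walk.cons (spider_adj_leg_succ m k j h).symm p, by simp [hp]⟩

lemma spider_walk_seg (m : Fin M) (k : Fin K) :
    ∀ (d j : ℕ) (h : j + d < L),
      ∃ p : (spiderGraph M K L).Walk (Sum.inr (m, k, ⟨j, by omega⟩)) (Sum.inr (m, k, ⟨j + d, h⟩)),
        p.length = d
  | 0, j, h => ⟨SimpleGraph.Walk.nil, rfl⟩
  | (d+1), j, h => by
    obtain ⟨p, hp⟩ := spider_walk_seg m k d (j+1) (by omega)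
    refine ⟨SimpleGraph.Walk.cons (spider_adj_leg_succ m k j (by omega)) (p.copy rfl ?_), ?_⟩
    · congr 1
      simp [Fin.ext_iff]; omega
    · simp [hp]

/-- Potential: intended distance to the leg vertex `(m', k', l')`. -/
def spiderPot (m' : Fin M) (k' : Fin K) (l' : Fin L) : SpiderVertex M K L → ℕ
  | Sum.inl c => if c = m' then (l' : ℕ) + 1 else (l' : ℕ) + 2
  | Sum.inr (a, b, j) =>
      if a = m' then
        (if b = k' then max (j : ℕ) (l' : ℕ) - min (j : ℕ) (l' : ℕ)
         else (j : ℕ) + (l' : ℕ) + 2)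
      else (j : ℕ) + (l' : ℕ) + 3

lemma spiderPot_lip (m' : Fin M) (k' : Fin K) (l' : Fin L) {u v : SpiderVertex M K L}
    (h : (spiderGraph M K L).Adj u v) :
    spiderPot m' k' l' u ≤ spiderPot m' k' l' v + 1 := by
  obtain ⟨-, h | h⟩ := h
  · rcases u with c | ⟨a, b, j⟩ <;> rcases v with c' | ⟨a', b', j'⟩ <;>
      simp only [spiderRel] at h
    · simp only [spiderPot]; split_ifs <;> omega
    · obtain ⟨rfl, h0⟩ := h
      simp only [spiderPot]; split_ifs <;> omega
    · obtain ⟨rfl, rfl, hj⟩ := h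
      simp only [spiderPot]; split_ifs <;> omega
  · rcases u with c | ⟨a, b, j⟩ <;> rcases v with c' | ⟨a', b', j'⟩ <;>
      simp only [spiderRel] at h
    · simp only [spiderPot]; split_ifs <;> omega
    · obtain ⟨rfl, h0⟩ := h
      simp only [spiderPot]; split_ifs <;> omega
    · obtain ⟨rfl, rfl, hj⟩ := h
      simp only [spiderPot]; split_ifs <;> omega

lemma spiderPot_le_walk (m' : Fin M) (k' : Fin K) (l' : Fin L) {s t : SpiderVertex M K L}
    (p : (spiderGraph M K L).Walk s t) :
    spiderPot m' k' l' s ≤ p.length + spiderPot m' k' l' t := by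
  induction p with
  | nil => simp
  | cons h q ih =>
      have := spiderPot_lip m' k' l' h
      simp only [SimpleGraph.Walk.length_cons]
      omega

end Aux

section Main
variable {M K L : ℕ}

lemma spider_walk_seg' (m : Fin M) (k : Fin K) (l l' : Fin L) (h : (l : ℕ) ≤ (l' : ℕ)) :
    ∃ p : (spiderGraph M K L).Walk (Sum.inr (m, k, l)) (Sum.inr (m, k, l')),
      p.length = (l' : ℕ) - (l : ℕ) := by
  obtain ⟨p, hp⟩ := spider_walk_seg (L := L) m k ((l' : ℕ) - (l : ℕ)) (l : ℕ) (by omega)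
  refine ⟨p.copy (by simp) (by simp [Fin.ext_iff]; omega), by simpa using hp⟩

lemma spider_walk_to_core' (m : Fin M) (k : Fin K) (l : Fin L) :
    ∃ p : (spiderGraph M K L).Walk (Sum.inr (m, k, l)) (Sum.inl m), p.length = (l : ℕ) + 1 := by
  obtain ⟨p, hp⟩ := spider_walk_to_core m k (l : ℕ) l.isLt
  exact ⟨p.copy (by simp) rfl, by simpa using hp⟩

lemma spider_dist_eq (m' : Fin M) (k' : Fin K) (l' : Fin L) {s : SpiderVertex M K L} (D : ℕ)
    (p : (spiderGraph M K L).Walk s (Sum.inr (m', k', l'))) (hlen : p.length = D)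
    (hpot : spiderPot m' k' l' s = D) :
    (spiderGraph M K L).dist s (Sum.inr (m', k', l')) = D := by
  have h1 : (spiderGraph M K L).dist s (Sum.inr (m', k', l')) ≤ D :=
    hlen ▸ SimpleGraph.dist_le p
  obtain ⟨q, hq⟩ := p.reachable.exists_walk_length_eq_dist
  have h2 := spiderPot_le_walk m' k' l' q
  have hpt : spiderPot m' k' l' (Sum.inr (m', k', l')) = 0 := by simp [spiderPot]
  omega

theorem spider_dist_leg_leg' (M K L : ℕ)
    (m m' : Fin M) (k k' : Fin K) (l l' : Fin L) :
    (spiderGraph M K L).dist (Sum.inr (m, k, l)) (Sum.inr (m', k', l')) =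
      if m = m' then
        (if k = k' then max (l : ℕ) (l' : ℕ) - min (l : ℕ) (l' : ℕ)
         else (l : ℕ) + (l' : ℕ) + 2)
      else (l : ℕ) + (l' : ℕ) + 3 := by
  by_cases hm : m = m'
  · subst hm
    by_cases hk : k = k'
    · subst hk
      rw [if_pos rfl, if_pos rfl]
      rcases le_total (l : ℕ) (l' : ℕ) with h | h
      · obtain ⟨p, hp⟩ := spider_walk_seg' m k l l' h
        exact spider_dist_eq m k l' _ p (by omega) (by simp [spiderPot])
      · obtain ⟨p, hp⟩ := spider_walk_seg' m k l' l h
        exact spider_dist_eq m k l' _ p.reverse (by simp [hp]; omega)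
          (by simp [spiderPot])
    · rw [if_pos rfl, if_neg hk]
      obtain ⟨p1, hp1⟩ := spider_walk_to_core' m k l
      obtain ⟨p2, hp2⟩ := spider_walk_to_core' m k' l'
      refine spider_dist_eq m k' l' _ (p1.append p2.reverse) ?_ ?_
      · simp [hp1, hp2]; omega
      · simp [spiderPot, hk]
  · rw [if_neg hm]
    obtain ⟨p1, hp1⟩ := spider_walk_to_core' m k l
    obtain ⟨p2, hp2⟩ := spider_walk_to_core' m' k' l'
    refine spider_dist_eq m' k' l' _
      (p1.append (SimpleGraph.Walk.cons (spider_adj_core_core m m' hm) p2.reverse)) ?_ ?_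
    · simp [hp1, hp2]; omega
    · simp [spiderPot, hm]

end Main

/-- For all `M ≥ 2`, `K ≥ 1`, `L ≥ 1`, in `Sp(M,K,L)` the graph distance
between distinct leg vertices `v_{m,k,ℓ}` and `v_{m',k',ℓ'}` equals `|ℓ − ℓ'|` if
`m = m'` and `k = k'`; `ℓ + ℓ' + 2` if `m = m'` and `k ≠ k'`; and `ℓ + ℓ' + 3` if
`m ≠ m'`. -/
theorem spider_dist_leg_leg (M K L : ℕ) (hM : 2 ≤ M) (hK : 1 ≤ K) (hL : 1 ≤ L)
    (m m' : Fin M) (k k' : Fin K) (l l' : Fin L)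
    (hne : (m, k, l) ≠ (m', k', l')) :
    (spiderGraph M K L).dist (Sum.inr (m, k, l)) (Sum.inr (m', k', l')) =
      if m = m' then
        (if k = k' then max (l : ℕ) (l' : ℕ) - min (l : ℕ) (l' : ℕ)
         else (l : ℕ) + (l' : ℕ) + 2)
      else (l : ℕ) + (l' : ℕ) + 3 := by
  exact spider_dist_leg_leg' M K L m m' k k' l l'
end

section
/- For all natural numbers M ≥ 2, K ≥ 1, L ≥ 2, and for every j with 2 ≤ j ≤ L, the number of unordered pairs of distinct vertices of the spider graph Sp(M,K,L) at graph distance exactly j equals KM(L − j + 1) + M·K(K−1)/2·(j − 1) + KM(M − 1) + M·K²(M−1)/2·(j − 2). -/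
/-- `alphaSpider M K L j` is the number of unordered pairs of distinct vertices of
`Sp(M,K,L)` at graph distance exactly `j`. -/
noncomputable def alphaSpider (M K L j : ℕ) : ℕ :=
  Nat.card {p : Sym2 (SpiderVertex M K L) //
    ¬ p.IsDiag ∧ ∀ u v : SpiderVertex M K L, p = s(u, v) →
      (spiderGraph M K L).dist u v = j}

/-!
The graph distance of `Sp(M,K,L)` is given by an explicit formula `spiderDist`: it vanishes
on the diagonal, changes by at most one along an edge, and from every other vertex some edge
decreases it, which characterises the distance to a fixed vertex. Counting unordered pairs at
distance `j` is the handshake lemma for the graph of such pairs, so `2 α_j` is the sum over all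
vertices of the number of vertices at distance `j`. For `2 ≤ j ≤ L` a core vertex sees exactly
one vertex at distance `j` on each of the `M K` legs, and the counts for a leg vertex at level
`ℓ` are explicit indicator sums in `ℓ`, which add up along a leg.
-/

open Finset

namespace SimpleGraph

variable {V : Type*} {G : SimpleGraph V}

theorem Walk.apply_le_apply_add_length {f : V → ℕ} (hf : ∀ u w, G.Adj u w → f u ≤ f w + 1)
    {u v : V} (p : G.Walk u v) : f u ≤ f v + p.length := by
  induction p with
  | nil => simp
  | cons h _ ih => rw [Walk.length_cons]; linarith [hf _ _ h]

theorem exists_walk_length_le_of_descent {v : V} (f : V → ℕ)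
    (hf : ∀ u ≠ v, ∃ w, G.Adj u w ∧ f w < f u) (u : V) :
    ∃ p : G.Walk u v, p.length ≤ f u := by
  induction hn : f u using Nat.strong_induction_on generalizing u with
  | _ n ih =>
    by_cases hu : u = v
    · subst hu; exact ⟨.nil, by simp⟩
    obtain ⟨w, hadj, hw⟩ := hf u hu
    obtain ⟨p, hp⟩ := ih (f w) (hn ▸ hw) w rfl
    exact ⟨.cons hadj p, by rw [Walk.length_cons]; omega⟩

theorem dist_eq_of_descent {v : V} (f : V → ℕ) (hv : f v = 0)
    (hlip : ∀ u w, G.Adj u w → f u ≤ f w + 1)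
    (hdesc : ∀ u ≠ v, ∃ w, G.Adj u w ∧ f w < f u) (u : V) : G.dist u v = f u := by
  obtain ⟨p, hp⟩ := exists_walk_length_le_of_descent f hdesc u
  obtain ⟨q, hq⟩ := p.reachable.exists_walk_length_eq_dist
  have := q.apply_le_apply_add_length hlip
  have := G.dist_le p
  omega

theorem two_mul_card_sym2_dist_eq [Fintype V] [DecidableEq V] {j : ℕ} (hj : j ≠ 0) :
    2 * Nat.card {p : Sym2 V // ¬ p.IsDiag ∧ ∀ u v, p = s(u, v) → G.dist u v = j} =
      ∑ u, #{v | G.dist u v = j} := by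
  classical
  let H := SimpleGraph.fromRel fun u v => G.dist u v = j
  have hH : ∀ u v, H.Adj u v ↔ G.dist u v = j := by
    intro u v
    rw [fromRel_adj, dist_comm, or_self, and_iff_right_iff_imp]
    rintro h rfl
    simp [hj.symm] at h
  have hedges : Nat.card {p : Sym2 V // ¬ p.IsDiag ∧ ∀ u v, p = s(u, v) → G.dist u v = j} =
      #H.edgeFinset := by
    rw [← Nat.card_eq_finsetCard]
    refine Nat.card_congr (Equiv.subtypeEquivRight fun p => ?_)
    induction p using Sym2.ind with
    | _ u v =>
      rw [mem_edgeFinset, mem_edgeSet, hH, Sym2.mk_isDiag_iff]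
      constructor
      · exact fun h => h.2 u v rfl
      · intro h
        refine ⟨fun huv => by simp [huv, hj.symm] at h, fun a b hab => ?_⟩
        rcases Sym2.eq_iff.mp hab with ⟨rfl, rfl⟩ | ⟨rfl, rfl⟩
        · exact h
        · rwa [dist_comm]
  have hdeg : ∀ u, H.degree u = #{v | G.dist u v = j} := by
    intro u
    rw [← card_neighborFinset_eq_degree]
    congr 1
    ext v
    simp [hH]
  rw [hedges, ← H.sum_degrees_eq_twice_card_edges]
  simp only [hdeg]

end SimpleGraph

theorem Fintype.sum_ite_eq_add_mul {ι : Type*} [Fintype ι] [DecidableEq ι] (i : ι) (a b : ℕ) :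
    ∑ x, (if i = x then a else b) = a + (Fintype.card ι - 1) * b := by
  rw [← add_sum_erase _ _ (mem_univ i), if_pos rfl,
    sum_ite_of_false fun x hx => (ne_of_mem_erase hx).symm, sum_const,
    card_erase_of_mem (mem_univ i), card_univ, smul_eq_mul]

theorem Fin.sum_ite_val_mem_Ico (n a b : ℕ) :
    ∑ x : Fin n, (if (x : ℕ) ∈ Ico a b then 1 else 0) = min n b - a := by
  rw [Fin.sum_univ_eq_sum_range (fun x => if x ∈ Ico a b then 1 else 0), sum_boole,
    Nat.cast_id, ← Nat.card_Ico]
  congr 1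
  ext x
  simp only [mem_filter, mem_range, mem_Ico]
  omega

theorem Fin.sum_ite_val_add_eq {n a b : ℕ} (h : b < n + a) :
    ∑ x : Fin n, (if (x : ℕ) + a = b then 1 else 0) = if a ≤ b then 1 else 0 := by
  simp only [show ∀ x : ℕ, x + a = b ↔ x ∈ Ico (b - a) (b + 1 - a) from fun x => by
    simp only [mem_Ico]; omega, Fin.sum_ite_val_mem_Ico]
  split_ifs <;> omega

theorem Fin.sum_ite_dist_eq {n j : ℕ} (hj : j ≠ 0) (y : Fin n) :
    ∑ x : Fin n, (if Nat.dist y x = j then 1 else 0) =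
      (if y + j < n then 1 else 0) + (if j ≤ y then 1 else 0) := by
  simp only [show ∀ x : ℕ, (if Nat.dist y x = j then 1 else 0) =
      (if x ∈ Ico (y + j) (y + j + 1) then 1 else 0) +
        (if x ∈ Ico (y - j) (y + 1 - j) then 1 else 0)
    from fun x => by simp only [Nat.dist.eq_1, mem_Ico]; split_ifs <;> omega,
    sum_add_distrib, Fin.sum_ite_val_mem_Ico]
  have := y.isLt
  split_ifs <;> omega

theorem Fin.sum_ite_val_add_lt (n a : ℕ) :
    ∑ x : Fin n, (if (x : ℕ) + a < n then 1 else 0) = n - a := by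
  simp only [show ∀ x : ℕ, x + a < n ↔ x ∈ Ico 0 (n - a) from fun x => by
    simp only [mem_Ico]; omega, Fin.sum_ite_val_mem_Ico]
  omega

theorem Fin.sum_ite_le_val (n a : ℕ) :
    ∑ x : Fin n, (if a ≤ (x : ℕ) then 1 else 0) = n - a := by
  simp only [show ∀ x : Fin n, a ≤ (x : ℕ) ↔ (x : ℕ) ∈ Ico a n from fun x => by
    simp only [mem_Ico]; omega, Fin.sum_ite_val_mem_Ico, min_self]

theorem Fin.sum_ite_val_add_le {n a b : ℕ} (h : b < n + a) :
    ∑ x : Fin n, (if (x : ℕ) + a ≤ b then 1 else 0) = b + 1 - a := by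
  simp only [show ∀ x : ℕ, x + a ≤ b ↔ x ∈ Ico 0 (b + 1 - a) from fun x => by
    simp only [mem_Ico]; omega, Fin.sum_ite_val_mem_Ico]
  omega

section Spider

variable {M K L j : ℕ}

def spiderDist : SpiderVertex M K L → SpiderVertex M K L → ℕ
  | .inl m, .inl m' => if m = m' then 0 else 1
  | .inl m, .inr (m', _, l) => if m = m' then l + 1 else l + 2
  | .inr (m, _, l), .inl m' => if m = m' then l + 1 else l + 2
  | .inr (m, k, l), .inr (m', k', l') =>
      if m = m' then if k = k' then Nat.dist l l' else l + l' + 2 else l + l' + 3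

theorem spiderDist_self (u : SpiderVertex M K L) : spiderDist u u = 0 := by
  rcases u with m | ⟨m, k, l⟩ <;> simp [spiderDist]

theorem spiderDist_le_of_adj {u w : SpiderVertex M K L} (h : (spiderGraph M K L).Adj u w)
    (v : SpiderVertex M K L) : spiderDist u v ≤ spiderDist w v + 1 := by
  rcases u with m | ⟨m, k, l⟩ <;> rcases w with m' | ⟨m', k', l'⟩ <;>
    rcases v with m'' | ⟨m'', k'', l''⟩ <;>
    simp only [spiderGraph, SimpleGraph.fromRel_adj, spiderRel, ne_eq, Sum.inl.injEq,
      Sum.inr.injEq, Prod.mk.injEq, false_or, or_false, spiderDist, Nat.dist.eq_1] at h ⊢ <;>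
    casesm* _ ∨ _, _ ∧ _ <;> subst_vars <;> split_ifs <;> omega

theorem spiderGraph_adj_inl_inl {m m' : Fin M} (h : m ≠ m') :
    (spiderGraph M K L).Adj (.inl m) (.inl m') := by
  simp [spiderGraph, spiderRel, h]

theorem spiderGraph_adj_inl_inr (m : Fin M) (k : Fin K) {l : Fin L} (hl : (l : ℕ) = 0) :
    (spiderGraph M K L).Adj (.inl m) (.inr (m, k, l)) := by
  simp [spiderGraph, spiderRel, hl]

theorem spiderGraph_adj_inr_inr (m : Fin M) (k : Fin K) {l l' : Fin L} (h : (l : ℕ) + 1 = l') :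
    (spiderGraph M K L).Adj (.inr (m, k, l)) (.inr (m, k, l')) := by
  simp only [spiderGraph, SimpleGraph.fromRel_adj, spiderRel, ne_eq, Sum.inr.injEq,
    Prod.mk.injEq, Fin.ext_iff, true_and]
  omega

theorem exists_adj_spiderDist_lt {u v : SpiderVertex M K L} (huv : u ≠ v) :
    ∃ w, (spiderGraph M K L).Adj u w ∧ spiderDist w v < spiderDist u v := by
  rcases u with m | ⟨m, k, ⟨l, hl⟩⟩ <;> rcases v with m' | ⟨m', k', ⟨l', hl'⟩⟩
  · have hm : m ≠ m' := by simpa using huv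
    exact ⟨.inl m', spiderGraph_adj_inl_inl hm, by simp [spiderDist, hm]⟩
  · by_cases hm : m = m'
    · subst hm
      exact ⟨.inr (m, k', ⟨0, by omega⟩), spiderGraph_adj_inl_inr m k' rfl,
        by simp [spiderDist, Nat.dist.eq_1]⟩
    · exact ⟨.inl m', spiderGraph_adj_inl_inl hm, by simp [spiderDist, hm]⟩
  · rcases l with _ | l
    · exact ⟨.inl m, (spiderGraph_adj_inl_inr m k rfl).symm,
        by simp only [spiderDist]; split_ifs <;> omega⟩
    · exact ⟨.inr (m, k, ⟨l, by omega⟩), (spiderGraph_adj_inr_inr m k rfl).symm,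
        by simp only [spiderDist]; split_ifs <;> omega⟩
  · by_cases hup : m = m' ∧ k = k' ∧ l < l'
    · obtain ⟨rfl, rfl, hll'⟩ := hup
      refine ⟨.inr (m, k, ⟨l + 1, by omega⟩), spiderGraph_adj_inr_inr m k rfl, ?_⟩
      simp only [spiderDist, if_true, Nat.dist.eq_1]
      omega
    have hle : m = m' → k = k' → l' ≤ l := fun hm hk => not_lt.mp fun h => hup ⟨hm, hk, h⟩
    rcases l with _ | l
    · exact ⟨.inl m, (spiderGraph_adj_inl_inr m k rfl).symm,
        by simp only [spiderDist, Nat.dist.eq_1]; split_ifs <;> grind⟩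
    · exact ⟨.inr (m, k, ⟨l, by omega⟩), (spiderGraph_adj_inr_inr m k rfl).symm,
        by simp only [spiderDist, Nat.dist.eq_1]; split_ifs <;> grind⟩

theorem spiderGraph_dist (u v : SpiderVertex M K L) :
    (spiderGraph M K L).dist u v = spiderDist u v :=
  SimpleGraph.dist_eq_of_descent (spiderDist · v) (spiderDist_self v)
    (fun _ _ h => spiderDist_le_of_adj h v) (fun _ h => exists_adj_spiderDist_lt h) u

theorem card_sphere_inl (hj : 2 ≤ j) (hjL : j ≤ L) (m : Fin M) :
    #{v : SpiderVertex M K L | spiderDist (.inl m) v = j} = M * K := by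
  rw [card_filter, Fintype.sum_sum_type]
  simp only [Fintype.sum_prod_type, spiderDist.eq_def,
    apply_ite (fun n : ℕ => if n = j then 1 else 0), sum_ite_irrel,
    Fin.sum_ite_val_add_eq (show j < L + 1 by omega),
    Fin.sum_ite_val_add_eq (show j < L + 2 by omega), if_pos (show 1 ≤ j by omega), if_pos hj,
    if_neg (show 0 ≠ j by omega), if_neg (show 1 ≠ j by omega),
    ite_self, sum_const, card_univ, Fintype.card_fin, smul_eq_mul, mul_one, mul_zero, zero_add]

theorem card_sphere_inr (hj : j ≠ 0) (hjL : j ≤ L) (m : Fin M) (k : Fin K) (l : Fin L) :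
    #{v : SpiderVertex M K L | spiderDist (.inr (m, k, l)) v = j} =
      ((if l + 1 = j then 1 else 0) + (M - 1) * (if l + 2 = j then 1 else 0)) +
      ((if l + j < L then 1 else 0) + (if j ≤ l then 1 else 0) +
        (K - 1) * (if l + 2 ≤ j then 1 else 0) +
        (M - 1) * (K * (if l + 3 ≤ j then 1 else 0))) := by
  have hleg : ∀ c x : ℕ, (l : ℕ) + x + c = j ↔ x + (l + c) = j := fun c x => by omega
  rw [card_filter, Fintype.sum_sum_type]
  simp only [Fintype.sum_prod_type, spiderDist.eq_def,
    apply_ite (fun n : ℕ => if n = j then 1 else 0),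
    sum_ite_irrel, Fintype.sum_ite_eq_add_mul, Fintype.card_fin, Fin.sum_ite_dist_eq hj, hleg,
    Fin.sum_ite_val_add_eq (show j < L + (l + 2) by omega),
    Fin.sum_ite_val_add_eq (show j < L + (l + 3) by omega), sum_const, card_univ, smul_eq_mul,
    mul_ite _ K]

theorem sum_card_sphere_inr (hj : 2 ≤ j) (hjL : j ≤ L) (m : Fin M) (k : Fin K) :
    ∑ l : Fin L, #{v : SpiderVertex M K L | spiderDist (.inr (m, k, l)) v = j} =
      M + (2 * (L - j) + (K - 1) * (j - 1) + (M - 1) * (K * (j - 2))) := by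
  simp only [card_sphere_inr (show j ≠ 0 by omega) hjL, sum_add_distrib, ← mul_sum,
    Fin.sum_ite_val_add_eq (show j < L + 1 by omega),
    Fin.sum_ite_val_add_eq (show j < L + 2 by omega), Fin.sum_ite_val_add_lt, Fin.sum_ite_le_val,
    Fin.sum_ite_val_add_le (show j < L + 2 by omega),
    Fin.sum_ite_val_add_le (show j < L + 3 by omega), if_pos hj, if_pos (show 1 ≤ j by omega),
    show j + 1 - 2 = j - 1 by omega, show j + 1 - 3 = j - 2 by omega]
  have := m.pos
  omega

end Spider

theorem spider_alpha_small_general (M K L j : ℕ) (hM : 2 ≤ M) (hK : 1 ≤ K)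
    (hj2 : 2 ≤ j) (hjL : j ≤ L) :
    alphaSpider M K L j =
      K * M * (L - j + 1) + M * K * (K - 1) / 2 * (j - 1) + K * M * (M - 1)
        + M * K ^ 2 * (M - 1) / 2 * (j - 2) := by
  have hsum : 2 * alphaSpider M K L j = M * (M * K) +
      M * (K * (M + (2 * (L - j) + (K - 1) * (j - 1) + (M - 1) * (K * (j - 2))))) := by
    rw [alphaSpider, SimpleGraph.two_mul_card_sym2_dist_eq (by omega)]
    simp only [spiderGraph_dist, Fintype.sum_sum_type, Fintype.sum_prod_type,
      card_sphere_inl hj2 hjL, sum_card_sphere_inr hj2 hjL, sum_const, card_univ,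
      Fintype.card_fin, smul_eq_mul]
  have hb : 2 * (M * K * (K - 1) / 2) = M * K * (K - 1) :=
    Nat.two_mul_div_two_of_even (by rw [mul_assoc]; exact (Nat.even_mul_pred_self K).mul_left M)
  have hd : 2 * (M * K ^ 2 * (M - 1) / 2) = M * K ^ 2 * (M - 1) :=
    Nat.two_mul_div_two_of_even (by
      rw [mul_right_comm]; exact (Nat.even_mul_pred_self M).mul_right _)
  refine Nat.eq_of_mul_eq_mul_left two_pos ?_
  rw [hsum]
  generalize M * K * (K - 1) / 2 = b at hb ⊢
  generalize M * K ^ 2 * (M - 1) / 2 = d at hd ⊢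
  zify [hK, hjL, hj2, show 1 ≤ j by omega, show 1 ≤ M by omega] at hb hd ⊢
  linear_combination (-(j : ℤ) + 1) * hb + (-(j : ℤ) + 2) * hd

/-- For all `M ≥ 2`, `K ≥ 1`, `L ≥ 2` and `2 ≤ j ≤ L`, the number of
unordered pairs of distinct vertices of `Sp(M,K,L)` at distance exactly `j` equals
`KM(L − j + 1) + M·K(K−1)/2·(j−1) + KM(M−1) + M·K²(M−1)/2·(j−2)`. -/
theorem spider_alpha_small (M K L j : ℕ) (hM : 2 ≤ M) (hK : 1 ≤ K) (hL : 2 ≤ L)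
    (hj2 : 2 ≤ j) (hjL : j ≤ L) :
    alphaSpider M K L j =
      K * M * (L - j + 1) + M * K * (K - 1) / 2 * (j - 1) + K * M * (M - 1)
        + M * K ^ 2 * (M - 1) / 2 * (j - 2) :=
  spider_alpha_small_general M K L j hM hK hj2 hjL
end
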